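/- Lipschitz continuity of the regularized best-response map: let A ⊆ ℝ^m be a nonempty compact convex set, c > 0, and let ψ : ℝ^m × ℝ^m → ℝ be continuously differentiable with L-Lipschitz gradient and such that y ↦ ψ(x,y) is concave for every x. For each x let y*(x) denote the unique maximizer of y ↦ ψ(x,y) − (c/2)‖x − y‖² over A. Then for all x₁, x₂ ∈ ℝ^m, ‖y*(x₁) − y*(x₂)‖ ≤ (L_c / c) ‖x₁ − x₂‖, where L_c is any Lipschitz constant of the gradient of the regularized function ψ_c(x,y) = ψ(x,y) − (c/2)‖x − y‖². -/

import Mathlib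

/-!
Write `G x y = ∇ᵧψ(x, y) + c (x - y)` for the `y`-gradient of the regularized objective. Optimality
of `y₁ = y*(x₁)` and `y₂ = y*(x₂)` over the convex set `A` gives the variational inequalities
`⟪G x₁ y₁, y₂ - y₁⟫ ≤ 0` and `⟪G x₂ y₂, y₁ - y₂⟫ ≤ 0`, while concavity of `ψ(x₂, ·)` makes
`G x₂` `c`-strongly monotone (decreasing). Together these give
`c ‖y₁ - y₂‖² ≤ ⟪G x₁ y₁ - G x₂ y₁, y₁ - y₂⟫`, and the Lipschitz bound on the gradient of the
regularized objective bounds `‖G x₁ y₁ - G x₂ y₁‖` by `L_c ‖x₁ - x₂‖`.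
-/

open RealInnerProductSpace

section

variable {E : Type*} [NormedAddCommGroup E] [InnerProductSpace ℝ E]

theorem mul_norm_sub_le_of_inner_nonpos {c : ℝ} {u₁ u₂ w y₁ y₂ : E}
    (h₁ : ⟪u₁, y₂ - y₁⟫ ≤ 0) (h₂ : ⟪u₂, y₁ - y₂⟫ ≤ 0)
    (hw : ⟪w - u₂, y₁ - y₂⟫ ≤ -c * ‖y₁ - y₂‖ ^ 2) :
    c * ‖y₁ - y₂‖ ≤ ‖u₁ - w‖ := by
  have h₁' : 0 ≤ ⟪u₁, y₁ - y₂⟫ := by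
    rw [← neg_sub, inner_neg_right] at h₁
    linarith
  have key : c * ‖y₁ - y₂‖ ^ 2 ≤ ‖u₁ - w‖ * ‖y₁ - y₂‖ :=
    calc c * ‖y₁ - y₂‖ ^ 2 ≤ ⟪u₁ - w, y₁ - y₂⟫ := by
          rw [inner_sub_left] at hw ⊢
          linarith
      _ ≤ ‖u₁ - w‖ * ‖y₁ - y₂‖ := real_inner_le_norm _ _
  rcases (norm_nonneg (y₁ - y₂)).eq_or_lt with hd | hd
  · rw [← hd, mul_zero]
    exact norm_nonneg _
  · nlinarith

variable [CompleteSpace E] {f : E → ℝ} {s : Set E}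

theorem IsMaxOn.inner_gradient_nonpos {g a y : E} (hs : Convex ℝ s) (hf : HasGradientAt f g a)
    (ha : a ∈ s) (hmax : IsMaxOn f s a) (hy : y ∈ s) : ⟪g, y - a⟫ ≤ 0 := by
  have hcone : y - a ∈ posTangentConeAt s a :=
    sub_mem_posTangentConeAt_of_segment_subset (hs.segment_subset ha hy)
  simpa using hmax.localize.hasFDerivWithinAt_nonpos
    (hasGradientAt_iff_hasFDerivAt.mp hf).hasFDerivWithinAt hcone

theorem ConcaveOn.le_add_inner_gradient {g x y : E} (hf : ConcaveOn ℝ s f)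
    (hg : HasGradientAt f g x) (hx : x ∈ s) (hy : y ∈ s) : f y ≤ f x + ⟪g, y - x⟫ := by
  set ℓ : ℝ →ᵃ[ℝ] E := AffineMap.lineMap x y
  have hline : HasDerivAt (f ∘ ℓ) ⟪g, y - x⟫ 0 := by
    have hℓ : HasDerivAt ℓ (y - x) 0 := AffineMap.hasDerivAt_lineMap
    have hfℓ : HasFDerivAt f ((InnerProductSpace.toDual ℝ E) g) (ℓ 0) := by
      simpa [ℓ] using hasGradientAt_iff_hasFDerivAt.mp hg
    simpa using hfℓ.comp_hasDerivAt 0 hℓ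
  have hslope := (hf.comp_affineMap ℓ).slope_le_of_hasDerivAt
    (by simpa [ℓ] using hx) (by simpa [ℓ] using hy) one_pos hline
  simp only [slope_def_field, Function.comp_apply, AffineMap.lineMap_apply_one,
    AffineMap.lineMap_apply_zero, sub_zero, div_one, ℓ] at hslope
  linarith

theorem ConcaveOn.inner_gradient_sub_nonpos {g₁ g₂ y₁ y₂ : E} (hf : ConcaveOn ℝ s f)
    (hg₁ : HasGradientAt f g₁ y₁) (hg₂ : HasGradientAt f g₂ y₂) (hy₁ : y₁ ∈ s) (hy₂ : y₂ ∈ s) :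
    ⟪g₁ - g₂, y₁ - y₂⟫ ≤ 0 := by
  have h₁ := hf.le_add_inner_gradient hg₁ hy₁ hy₂
  have h₂ := hf.le_add_inner_gradient hg₂ hy₂ hy₁
  rw [← neg_sub, inner_neg_right] at h₁
  rw [inner_sub_left]
  linarith

theorem HasGradientAt.sub_half_mul_norm_sub_sq {g y : E} (hf : HasGradientAt f g y) (c : ℝ)
    (x : E) : HasGradientAt (fun y => f y - c / 2 * ‖x - y‖ ^ 2) (g + c • (x - y)) y := by
  rw [hasGradientAt_iff_hasFDerivAt] at hf ⊢
  refine (hf.sub (((hasFDerivAt_id y).const_sub x).norm_sq.const_mul (c / 2))).congr_fderiv ?_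
  ext v
  simp only [id_eq, map_sub, ContinuousLinearMap.comp_neg, ContinuousLinearMap.comp_id, neg_sub,
    sub_apply, InnerProductSpace.toDual_apply_apply, smul_apply, coe_innerSL_apply, nsmul_eq_mul,
    Nat.cast_ofNat, smul_eq_mul, map_add, map_smul, add_apply]
  ring

end

theorem regularized_best_response_lipschitz_general
    (m : ℕ)
    (A : Set (EuclideanSpace ℝ (Fin m)))
    (hA_cvx : Convex ℝ A)
    (c : ℝ) (hc : 0 < c)
    (ψ : EuclideanSpace ℝ (Fin m) → EuclideanSpace ℝ (Fin m) → ℝ)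
    (gx gy : EuclideanSpace ℝ (Fin m) → EuclideanSpace ℝ (Fin m) → EuclideanSpace ℝ (Fin m))
    (hgy : ∀ x y, HasGradientAt (fun y' => ψ x y') (gy x y) y)
    (hccv : ∀ x, ConcaveOn ℝ Set.univ (fun y => ψ x y))
    (Lc : ℝ) (hLc : 0 ≤ Lc)
    -- `L_c` is a Lipschitz constant of the joint gradient of the regularized objective
    -- `ψ_c(x,y) = ψ(x,y) - (c/2)‖x-y‖²`:
    (hLipc : ∀ x₁ y₁ x₂ y₂,
      ‖(gx x₁ y₁ - c • (x₁ - y₁)) - (gx x₂ y₂ - c • (x₂ - y₂))‖ ^ 2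
          + ‖(gy x₁ y₁ + c • (x₁ - y₁)) - (gy x₂ y₂ + c • (x₂ - y₂))‖ ^ 2
        ≤ Lc ^ 2 * (‖x₁ - x₂‖ ^ 2 + ‖y₁ - y₂‖ ^ 2))
    (ystar : EuclideanSpace ℝ (Fin m) → EuclideanSpace ℝ (Fin m))
    (hystar : ∀ x, ystar x ∈ A ∧ ∀ y ∈ A,
      ψ x y - c / 2 * ‖x - y‖ ^ 2 ≤ ψ x (ystar x) - c / 2 * ‖x - ystar x‖ ^ 2) :
    ∀ x₁ x₂, ‖ystar x₁ - ystar x₂‖ ≤ (Lc / c) * ‖x₁ - x₂‖ := by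
  intro x₁ x₂
  set G := fun x y => gy x y + c • (x - y)
  have hopt : ∀ x, ∀ y ∈ A, ⟪G x (ystar x), y - ystar x⟫ ≤ 0 := fun x y hy =>
    IsMaxOn.inner_gradient_nonpos hA_cvx ((hgy x (ystar x)).sub_half_mul_norm_sub_sq c x)
      (hystar x).1 (isMaxOn_iff.mpr (hystar x).2) hy
  set y₁ := ystar x₁
  set y₂ := ystar x₂
  have hmono : ⟪G x₂ y₁ - G x₂ y₂, y₁ - y₂⟫ ≤ -c * ‖y₁ - y₂‖ ^ 2 := by
    have h := (hccv x₂).inner_gradient_sub_nonpos (hgy x₂ y₁) (hgy x₂ y₂) trivial trivial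
    rw [show G x₂ y₁ - G x₂ y₂ = (gy x₂ y₁ - gy x₂ y₂) - c • (y₁ - y₂) by module,
      inner_sub_left, real_inner_smul_left, real_inner_self_eq_norm_sq]
    linarith
  have hshift : ‖G x₁ y₁ - G x₂ y₁‖ ≤ Lc * ‖x₁ - x₂‖ := by
    have h := hLipc x₁ y₁ x₂ y₁
    rw [sub_self, norm_zero, zero_pow two_ne_zero, add_zero] at h
    refine abs_le_of_sq_le_sq' ?_ (by positivity) |>.2
    rw [mul_pow]
    linarith [sq_nonneg ‖(gx x₁ y₁ - c • (x₁ - y₁)) - (gx x₂ y₁ - c • (x₂ - y₁))‖]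
  have key := mul_norm_sub_le_of_inner_nonpos (hopt x₁ y₂ (hystar x₂).1)
    (hopt x₂ y₁ (hystar x₁).1) hmono
  rw [div_mul_eq_mul_div, le_div_iff₀ hc]
  linarith

/-- Lipschitz continuity of the regularized best-response map: with
`A ⊆ ℝ^m` nonempty compact convex, `c > 0`, `ψ` continuously differentiable with
`L`-Lipschitz gradient and concave in `y`, let `y*(x)` be the unique maximizer over `A`
of `y ↦ ψ(x,y) - (c/2)‖x-y‖²`. If `L_c` is a Lipschitz constant of the gradient of the
regularized objective `ψ_c(x,y) = ψ(x,y) - (c/2)‖x-y‖²` (whose partial gradients are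
`∇ₓψ - c(x-y)` and `∇ᵧψ + c(x-y)`), then `‖y*(x₁) - y*(x₂)‖ ≤ (L_c/c)‖x₁ - x₂‖`. -/
theorem regularized_best_response_lipschitz
    (m : ℕ)
    (A : Set (EuclideanSpace ℝ (Fin m)))
    (hA_ne : A.Nonempty) (hA_cpt : IsCompact A) (hA_cvx : Convex ℝ A)
    (c : ℝ) (hc : 0 < c)
    (ψ : EuclideanSpace ℝ (Fin m) → EuclideanSpace ℝ (Fin m) → ℝ)
    (gx gy : EuclideanSpace ℝ (Fin m) → EuclideanSpace ℝ (Fin m) → EuclideanSpace ℝ (Fin m))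
    (hgx : ∀ x y, HasGradientAt (fun x' => ψ x' y) (gx x y) x)
    (hgy : ∀ x y, HasGradientAt (fun y' => ψ x y') (gy x y) y)
    (L : ℝ) (hL : 0 < L)
    -- `L`-Lipschitz continuity of the joint gradient of `ψ`:
    (hLip : ∀ x₁ y₁ x₂ y₂,
      ‖gx x₁ y₁ - gx x₂ y₂‖ ^ 2 + ‖gy x₁ y₁ - gy x₂ y₂‖ ^ 2
        ≤ L ^ 2 * (‖x₁ - x₂‖ ^ 2 + ‖y₁ - y₂‖ ^ 2))
    (hccv : ∀ x, ConcaveOn ℝ Set.univ (fun y => ψ x y))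
    (Lc : ℝ) (hLc : 0 ≤ Lc)
    -- `L_c` is a Lipschitz constant of the joint gradient of the regularized objective
    -- `ψ_c(x,y) = ψ(x,y) - (c/2)‖x-y‖²`:
    (hLipc : ∀ x₁ y₁ x₂ y₂,
      ‖(gx x₁ y₁ - c • (x₁ - y₁)) - (gx x₂ y₂ - c • (x₂ - y₂))‖ ^ 2
          + ‖(gy x₁ y₁ + c • (x₁ - y₁)) - (gy x₂ y₂ + c • (x₂ - y₂))‖ ^ 2
        ≤ Lc ^ 2 * (‖x₁ - x₂‖ ^ 2 + ‖y₁ - y₂‖ ^ 2))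
    (ystar : EuclideanSpace ℝ (Fin m) → EuclideanSpace ℝ (Fin m))
    (hystar : ∀ x, ystar x ∈ A ∧ ∀ y ∈ A,
      ψ x y - c / 2 * ‖x - y‖ ^ 2 ≤ ψ x (ystar x) - c / 2 * ‖x - ystar x‖ ^ 2) :
    ∀ x₁ x₂, ‖ystar x₁ - ystar x₂‖ ≤ (Lc / c) * ‖x₁ - x₂‖ :=
  regularized_best_response_lipschitz_general m A hA_cvx c hc ψ gx gy hgy hccv Lc hLc hLipc ystar
    hystar
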